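/- Let a < b be real numbers, and let β and S be as follows: β(z) = exp((1/4) Log((z − b)/(z − a))) for z ∈ ℂ \ [a, b] (principal branch), and S(z) is the 2×2 matrix with S₁₁ = S₂₂ = (β + β⁻¹)/2, S₁₂ = (β − β⁻¹)/(2i), S₂₁ = −(β − β⁻¹)/(2i). Define E(z) = S(z) for Im z > 0 and E(z) = S(z) · [[0, 1], [−1, 0]] for Im z < 0. Then E extends to a holomorphic (matrix-valued) function on ℂ \ ((−∞, a] ∪ [b, +∞)); in particular E is analytic in a neighborhood of every point of (a, b). -/

import Mathlib

open Filter Topology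

noncomputable section

/-- `β(z) = ((z−b)/(z−a))^{1/4}` via the principal branch of the logarithm. -/
def betaFn (a b : ℝ) (z : ℂ) : ℂ :=
  Complex.exp ((1 / 4 : ℂ) * Complex.log ((z - (b : ℂ)) / (z - (a : ℂ))))

/-- The outside parametrix `S^∞(z)` built from `β`. -/
def Sout (a b : ℝ) (z : ℂ) : Matrix (Fin 2) (Fin 2) ℂ :=
  !![(betaFn a b z + (betaFn a b z)⁻¹) / 2, (betaFn a b z - (betaFn a b z)⁻¹) / (2 * Complex.I);
     -((betaFn a b z - (betaFn a b z)⁻¹) / (2 * Complex.I)),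
     (betaFn a b z + (betaFn a b z)⁻¹) / 2]

/-!
Write `(z - b)/(z - a) = -v` with `v = (b - z)/(z - a)`. The principal logarithm of `-v` is
`log v + π i` or `log v - π i` according as `Im v < 0` or `Im v > 0`, i.e. as `Im z > 0` or
`Im z < 0`. Hence `ρ = exp((log v + π i)/4)` equals `β` above the real axis and `iβ` below it.
Since `v` lies in the slit plane off `(-∞, a] ∪ [b, ∞)`, `ρ` is holomorphic there. Replacing
`β` by `iβ` in `S` multiplies it on the right by `[[0, 1], [-1, 0]]`, so `E = S(ρ)` is the
required extension.
-/

open Complex Real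

namespace Complex

lemma log_neg_of_im_neg {v : ℂ} (hv : v.im < 0) : log (-v) = log v + π * I := by
  rw [log, log, arg_neg_eq_arg_add_pi_of_im_neg hv, norm_neg]
  push_cast
  ring

lemma log_neg_of_im_pos {v : ℂ} (hv : 0 < v.im) : log (-v) = log v - π * I := by
  rw [log, log, arg_neg_eq_arg_sub_pi_of_im_pos hv, norm_neg]
  push_cast
  ring

end Complex

def outerMatrix (β : ℂ) : Matrix (Fin 2) (Fin 2) ℂ :=
  !![(β + β⁻¹) / 2, (β - β⁻¹) / (2 * I); -((β - β⁻¹) / (2 * I)), (β + β⁻¹) / 2]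

lemma Sout_eq_outerMatrix (a b : ℝ) (z : ℂ) : Sout a b z = outerMatrix (betaFn a b z) := rfl

lemma outerMatrix_I_mul (w : ℂ) : outerMatrix (I * w) = outerMatrix w * !![0, 1; -1, 0] := by
  have hinv : (I * w)⁻¹ = -I * w⁻¹ := by rw [mul_inv, inv_I]
  have hdiag : (I * w + (I * w)⁻¹) / 2 = -((w - w⁻¹) / (2 * I)) := by
    rw [hinv, div_mul_eq_div_div, div_I]
    ring
  have hoff : (I * w - (I * w)⁻¹) / (2 * I) = (w + w⁻¹) / 2 := by
    rw [hinv]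
    field_simp
    ring
  rw [outerMatrix, outerMatrix, Matrix.mul_fin_two, hdiag, hoff]
  simp

lemma DifferentiableAt.outerMatrix_apply {f : ℂ → ℂ} {z : ℂ} (hf : DifferentiableAt ℂ f z)
    (hf₀ : f z ≠ 0) (i j : Fin 2) : DifferentiableAt ℂ (fun z => outerMatrix (f z) i j) z := by
  fin_cases i <;> fin_cases j <;> simp only [outerMatrix, Matrix.of_apply, Matrix.cons_val',
    Matrix.cons_val_zero, Matrix.cons_val_one, Matrix.empty_val',
    Matrix.cons_val_fin_one, Fin.zero_eta, Fin.mk_one, Fin.isValue] <;> fun_prop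

lemma sub_ofReal_ne_zero_of_im_ne_zero {z : ℂ} (hz : z.im ≠ 0) (a : ℝ) : z - a ≠ 0 :=
  fun h => hz (by simpa using congrArg im h)

lemma im_sub_div_sub (a b : ℝ) (z : ℂ) :
    (((b : ℂ) - z) / (z - a)).im = (a - b) * z.im / normSq (z - a) := by
  rw [div_im]
  simp [normSq_apply]
  ring

def betaAcross (a b : ℝ) (z : ℂ) : ℂ :=
  exp ((1 / 4 : ℂ) * (log (((b : ℂ) - z) / (z - a)) + π * I))

lemma betaFn_eq_betaAcross {a b : ℝ} (hab : a < b) {z : ℂ} (hz : 0 < z.im) :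
    betaFn a b z = betaAcross a b z := by
  have hza := sub_ofReal_ne_zero_of_im_ne_zero hz.ne' a
  have hv : (((b : ℂ) - z) / (z - a)).im < 0 := by
    rw [im_sub_div_sub]
    exact div_neg_of_neg_of_pos (mul_neg_of_neg_of_pos (by linarith) hz) (normSq_pos.2 hza)
  rw [betaFn, betaAcross, ← neg_sub (b : ℂ) z, neg_div, log_neg_of_im_neg hv]

lemma betaAcross_eq_I_mul_betaFn {a b : ℝ} (hab : a < b) {z : ℂ} (hz : z.im < 0) :
    betaAcross a b z = I * betaFn a b z := by
  have hza := sub_ofReal_ne_zero_of_im_ne_zero hz.ne a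
  have hv : 0 < (((b : ℂ) - z) / (z - a)).im := by
    rw [im_sub_div_sub]
    exact div_pos (mul_pos_of_neg_of_neg (by linarith) hz) (normSq_pos.2 hza)
  rw [betaFn, betaAcross, ← neg_sub (b : ℂ) z, neg_div, log_neg_of_im_pos hv]
  conv_rhs => arg 1; rw [← exp_pi_div_two_mul_I]
  rw [← Complex.exp_add]
  ring_nf

lemma sub_div_sub_mem_slitPlane {a b : ℝ} (hab : a < b) {z : ℂ}
    (hz : z.im ≠ 0 ∨ a < z.re ∧ z.re < b) : ((b : ℂ) - z) / (z - a) ∈ slitPlane := by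
  rw [mem_slitPlane_iff]
  rcases eq_or_ne z.im 0 with him | him
  · have hre : a < z.re ∧ z.re < b := hz.resolve_left (not_not.2 him)
    have hz_real : z = (z.re : ℂ) := ext rfl (by simp [him])
    left
    rw [hz_real, ← ofReal_sub, ← ofReal_sub, ← ofReal_div, ofReal_re]
    exact div_pos (by linarith) (by linarith)
  · right
    rw [im_sub_div_sub]
    exact div_ne_zero (mul_ne_zero (sub_ne_zero.2 hab.ne) him)
      (normSq_pos.2 (sub_ofReal_ne_zero_of_im_ne_zero him a)).ne'

lemma differentiableAt_betaAcross {a b : ℝ} (hab : a < b) {z : ℂ}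
    (hz : z.im ≠ 0 ∨ a < z.re ∧ z.re < b) : DifferentiableAt ℂ (betaAcross a b) z := by
  have hslit := sub_div_sub_mem_slitPlane hab hz
  have hza : z - a ≠ 0 := fun h => slitPlane_ne_zero hslit (by rw [h, div_zero])
  have hv : DifferentiableAt ℂ (fun z : ℂ => ((b : ℂ) - z) / (z - a)) z :=
    (differentiableAt_const _).sub differentiableAt_id |>.div
      (differentiableAt_id.sub (differentiableAt_const _)) hza
  exact (((hv.clog hslit).add_const _).const_mul _).cexp

/-- the function `E` equal to `S` in the upper half plane and to
`S·[[0,1],[−1,0]]` in the lower half plane extends holomorphically to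
`ℂ \ ((−∞,a] ∪ [b,∞))`; in particular it is analytic near every point of `(a,b)`. -/
theorem E_extends_holomorphically (a b : ℝ) (hab : a < b) :
    ∃ E : ℂ → Matrix (Fin 2) (Fin 2) ℂ,
      (∀ i j : Fin 2, DifferentiableOn ℂ (fun z => E z i j)
        ({z : ℂ | z.im = 0 ∧ (z.re ≤ a ∨ b ≤ z.re)}ᶜ)) ∧
      (∀ z : ℂ, 0 < z.im → E z = Sout a b z) ∧
      (∀ z : ℂ, z.im < 0 → E z = Sout a b z * !![0, 1; -1, 0]) := by
  refine ⟨fun z => outerMatrix (betaAcross a b z), fun i j z hz => ?_, fun z hz => ?_,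
    fun z hz => ?_⟩
  · have hz' : z.im ≠ 0 ∨ a < z.re ∧ z.re < b := by
      simp only [Set.mem_compl_iff, Set.mem_ofPred_eq, not_and, not_or, not_le] at hz
      tauto
    exact ((differentiableAt_betaAcross hab hz').outerMatrix_apply (exp_ne_zero _) i j
      ).differentiableWithinAt
  · rw [Sout_eq_outerMatrix, betaFn_eq_betaAcross hab hz]
  · rw [Sout_eq_outerMatrix, ← outerMatrix_I_mul, ← betaAcross_eq_I_mul_betaFn hab hz]

end
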